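/- Let γ ∈ (1/2, 1), set f = ⌈1/(1−γ^{1/3})⌉, let n ≥ 2f + 2 be an integer, and let T = 2^{n−2f−1}. Let μ be the product measure on Fin T → Bool in which each coordinate is an independent fair Bernoulli(1/2) bit, and in the lower-bound chain with n states and MDP M(1) let S_0, …, S_T be the trajectory from state 1 driven by these random bits. Then the expected average optimal value of the visited states satisfies 1/(1−γ) − E_μ[(1/T)·Σ_{t=1}^{T} V*(S_t)] > 1/(4·(1−γ)). -/

import Mathlib

/-!
The state rises by at most one per step, so `V*(s) ≤ (1 + γ^(n-s)) / (2(1-γ))`. Under random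
play the state at time `t` exceeds `n - f - 1` only if the last `n - f - 1` coin flips all came
up `true`, which has probability `2^-(n-f-1) ≤ 1/4`; otherwise `γ^(n - S_t) ≤ γ^f ≤ 1/8`, the last
bound because `x^m ≤ e⁻¹` whenever `m (1 - x) ≥ 1` (applied to `x = γ^(1/3)`). Hence
`E[V*(S_t)] ≤ (1 + 1/8 + 1/4) / (2(1-γ)) = 11 / (16(1-γ))` at every time `t`, a gap of
`5 / (16(1-γ))` below the optimal value `1/(1-γ)`.
-/

open MeasureTheory

/-- The deterministic trajectory in the lower-bound chain with states `{1, …, n}`: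
from state `s`, action `true` moves right (capped at `n`), action `false` resets to `1`. -/
def traj (n : ℕ) (a : ℕ → Bool) (s : ℕ) : ℕ → ℕ
  | 0 => s
  | t + 1 => if a t then min (traj n a s t + 1) n else 1

/-- The reward of a state in the MDP `M(1)`: `1/2` at states `1, …, n-1` and `1` at state `n`. -/
noncomputable def reward (n : ℕ) (s : ℕ) : ℝ := if s < n then 1 / 2 else 1

/-- The `γ`-discounted reward of the action sequence `a` started from state `s`. -/
noncomputable def discReward (n : ℕ) (γ : ℝ) (a : ℕ → Bool) (s : ℕ) : ℝ :=
  ∑' t : ℕ, γ ^ t * reward n (traj n a s t)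

/-- The optimal value `V*(s)`: the supremum of the `γ`-discounted reward over
all action sequences. -/
noncomputable def Vstar (n : ℕ) (γ : ℝ) (s : ℕ) : ℝ :=
  ⨆ a : ℕ → Bool, discReward n γ a s

open Finset

lemma traj_le_add (n : ℕ) (a : ℕ → Bool) (s t : ℕ) : traj n a s t ≤ s + t := by
  induction t with
  | zero => simp [traj]
  | succ t ih => simp only [traj]; split <;> omega

lemma traj_le_sub_of_eq_false (n : ℕ) {a : ℕ → Bool} (s : ℕ) {i t : ℕ} (hit : i < t)
    (hi : a i = false) : traj n a s t ≤ t - i := by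
  induction t with
  | zero => omega
  | succ t ih =>
    simp only [traj]
    split
    · rcases Nat.lt_succ_iff_lt_or_eq.mp hit with hit | rfl
      · have := ih hit; omega
      · simp_all
    · omega

lemma hasSum_geometric_ite_le {γ : ℝ} (hγ0 : 0 ≤ γ) (hγ1 : γ < 1) (m : ℕ) :
    HasSum (fun t => if m ≤ t then γ ^ t else 0) (γ ^ m / (1 - γ)) := by
  rw [← hasSum_nat_add_iff' m, Finset.sum_eq_zero fun i hi => if_neg (by simpa using hi),
    sub_zero]
  simpa [pow_add, mul_comm, div_eq_mul_inv] using
    (hasSum_geometric_of_lt_one hγ0 hγ1).mul_left (γ ^ m)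

lemma discReward_le (n : ℕ) {γ : ℝ} (hγ0 : 0 ≤ γ) (hγ1 : γ < 1) (a : ℕ → Bool) (s : ℕ) :
    discReward n γ a s ≤ (1 + γ ^ (n - s)) / (2 * (1 - γ)) := by
  have hbound : ∀ t, γ ^ t * reward n (traj n a s t)
      ≤ (γ ^ t + if n - s ≤ t then γ ^ t else 0) / 2 := by
    intro t
    have := traj_le_add n a s t
    unfold reward
    split_ifs <;> first | omega | nlinarith [pow_nonneg hγ0 t]
  have hsum : HasSum (fun t => (γ ^ t + if n - s ≤ t then γ ^ t else 0) / 2)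
      ((1 + γ ^ (n - s)) / (2 * (1 - γ))) := by
    have h1γ : 1 - γ ≠ 0 := by linarith
    have := ((hasSum_geometric_of_lt_one hγ0 hγ1).add
      (hasSum_geometric_ite_le hγ0 hγ1 (n - s))).div_const 2
    rwa [show ((1 - γ)⁻¹ + γ ^ (n - s) / (1 - γ)) / 2
      = (1 + γ ^ (n - s)) / (2 * (1 - γ)) by field_simp] at this
  refine hasSum_le hbound (Summable.hasSum ?_) hsum
  refine .of_nonneg_of_le (fun t => ?_) hbound hsum.summable
  unfold reward
  split_ifs <;> positivity

lemma Vstar_le (n : ℕ) {γ : ℝ} (hγ0 : 0 ≤ γ) (hγ1 : γ < 1) (s : ℕ) :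
    Vstar n γ s ≤ (1 + γ ^ (n - s)) / (2 * (1 - γ)) :=
  ciSup_le fun a => discReward_le n hγ0 hγ1 a s

lemma pow_le_half_of_one_le_mul_one_sub {x : ℝ} (hx : 0 ≤ x) {m : ℕ}
    (hm : 1 ≤ m * (1 - x)) : x ^ m ≤ 1 / 2 :=
  calc x ^ m ≤ Real.exp (x - 1) ^ m :=
        pow_le_pow_left₀ hx (by linarith [Real.add_one_le_exp (x - 1)]) m
    _ = Real.exp (-(m * (1 - x))) := by rw [← Real.exp_nat_mul]; ring_nf
    _ ≤ Real.exp (-1) := Real.exp_le_exp.2 (by linarith)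
    _ ≤ 1 / 2 := by
        rw [Real.exp_neg, one_div]
        exact inv_anti₀ two_pos Real.exp_one_gt_two.le

lemma pow_ceil_one_div_one_sub_rpow_le {γ : ℝ} (hγ0 : 0 < γ) (hγ1 : γ < 1) :
    γ ^ ⌈1 / (1 - γ ^ ((1 : ℝ) / 3))⌉₊ ≤ 1 / 8 := by
  have hx0 : 0 ≤ γ ^ ((1 : ℝ) / 3) := Real.rpow_nonneg hγ0.le _
  have hx1 : γ ^ ((1 : ℝ) / 3) < 1 := Real.rpow_lt_one hγ0.le hγ1 (by norm_num)
  have hγ : γ = (γ ^ ((1 : ℝ) / 3)) ^ 3 := by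
    rw [← Real.rpow_natCast, ← Real.rpow_mul hγ0.le]; norm_num
  generalize γ ^ ((1 : ℝ) / 3) = x at hx0 hx1 hγ
  subst hγ
  have hm : 1 ≤ (⌈1 / (1 - x)⌉₊ : ℝ) * (1 - x) := by
    rw [← div_le_iff₀ (by linarith)]; exact Nat.le_ceil _
  calc (x ^ 3) ^ ⌈1 / (1 - x)⌉₊ = (x ^ ⌈1 / (1 - x)⌉₊) ^ 3 := by
        rw [← pow_mul, ← pow_mul, mul_comm]
    _ ≤ (1 / 2) ^ 3 :=
        pow_le_pow_left₀ (by positivity) (pow_le_half_of_one_le_mul_one_sub hx0 hm) 3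
    _ = 1 / 8 := by norm_num

lemma pi_bernoulli_setOf_forall_true {ι : Type*} [Fintype ι] {p : NNReal} (hp : p ≤ 1)
    (s : Finset ι) :
    Measure.pi (fun _ : ι => (PMF.bernoulli p hp).toMeasure) {x | ∀ i ∈ s, x i = true}
      = (p : ENNReal) ^ s.card := by
  have hbox : {x : ι → Bool | ∀ i ∈ s, x i = true} = (s : Set ι).pi fun _ => {true} := by
    ext; simp [Set.mem_pi]
  rw [hbox, Measure.pi_pi_finset]
  simp
  rfl

noncomputable def fairCoins (T : ℕ) : Measure (Fin T → Bool) :=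
  Measure.pi fun _ : Fin T => (PMF.bernoulli (1 / 2) (by norm_num)).toMeasure

instance (T : ℕ) : IsProbabilityMeasure (fairCoins T) := by
  unfold fairCoins; infer_instance

def coinActions {T : ℕ} (x : Fin T → Bool) (s : ℕ) : Bool :=
  if h : s < T then x ⟨s, h⟩ else false

lemma card_filter_fin_window {T t m : ℕ} (hmt : m ≤ t) (htT : t ≤ T) :
    (univ.filter fun i : Fin T => t - m ≤ (i : ℕ) ∧ (i : ℕ) < t).card = m := by
  have : (univ.filter fun i : Fin T => t - m ≤ (i : ℕ) ∧ (i : ℕ) < t).map Fin.valEmbedding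
      = Ico (t - m) t := by
    ext j
    simp only [mem_map, mem_filter, mem_univ, true_and, Fin.valEmbedding_apply, mem_Ico]
    exact ⟨fun ⟨i, hi, hij⟩ => hij ▸ hi, fun hj => ⟨⟨j, by omega⟩, hj, rfl⟩⟩
  rw [← card_map, this, Nat.card_Ico]
  omega

lemma fairCoins_setOf_lt_traj_le (n m : ℕ) {T t : ℕ} (htT : t ≤ T) :
    fairCoins T {x | m < traj n (coinActions x) 1 t} ≤ (1 / 2) ^ m := by
  rcases lt_or_ge t m with htm | hmt
  · have hempty : {x : Fin T → Bool | m < traj n (coinActions x) 1 t} = ∅ := by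
      ext x
      have := traj_le_add n (coinActions x) 1 t
      simp only [Set.mem_ofPred_eq, Set.mem_empty_iff_false, iff_false]
      omega
    simp [hempty]
  set W := univ.filter fun i : Fin T => t - m ≤ (i : ℕ) ∧ (i : ℕ) < t
  calc fairCoins T {x | m < traj n (coinActions x) 1 t}
      ≤ fairCoins T {x | ∀ i ∈ W, x i = true} := by
        refine measure_mono fun x hx i hi => ?_
        simp only [W, mem_filter, mem_univ, true_and] at hi
        by_contra hxi
        have hreset : coinActions x i = false := by simpa [coinActions] using hxi
        have := traj_le_sub_of_eq_false n 1 hi.2 hreset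
        simp only [Set.mem_ofPred_eq] at hx
        omega
    _ = (1 / 2) ^ m := by
        rw [fairCoins, pi_bernoulli_setOf_forall_true, card_filter_fin_window hmt htT]
        norm_num

lemma integral_pow_sub_traj_le {γ : ℝ} (hγ0 : 0 ≤ γ) (hγ1 : γ ≤ 1) (n m : ℕ) {T t : ℕ}
    (htT : t ≤ T) :
    ∫ x, γ ^ (n - traj n (coinActions x) 1 t) ∂fairCoins T ≤ γ ^ (n - m) + (1 / 2) ^ m := by
  set E := {x : Fin T → Bool | m < traj n (coinActions x) 1 t}
  have hpt : ∀ x, γ ^ (n - traj n (coinActions x) 1 t) ≤ γ ^ (n - m) + E.indicator 1 x := by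
    intro x
    by_cases hx : x ∈ E
    · rw [Set.indicator_of_mem hx, Pi.one_apply]
      linarith [pow_le_one₀ hγ0 hγ1 (n := n - traj n (coinActions x) 1 t),
        pow_nonneg hγ0 (n - m)]
    · rw [Set.indicator_of_notMem hx, add_zero]
      simp only [E, Set.mem_ofPred_eq, not_lt] at hx
      exact pow_le_pow_of_le_one hγ0 hγ1 (by omega)
  have hE : (fairCoins T).real E ≤ (1 / 2) ^ m := by
    simpa [measureReal_def] using
      ENNReal.toReal_mono (by simp) (fairCoins_setOf_lt_traj_le n m htT)
  calc _ ≤ ∫ x, γ ^ (n - m) + E.indicator 1 x ∂fairCoins T :=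
        integral_mono .of_finite .of_finite hpt
    _ = γ ^ (n - m) + (fairCoins T).real E := by
        rw [integral_add .of_finite .of_finite, integral_const,
          integral_indicator_one E.toFinite.measurableSet]
        simp
    _ ≤ _ := by linarith

lemma integral_Vstar_traj_le {γ : ℝ} (hγ0 : 0 ≤ γ) (hγ1 : γ < 1) (n m : ℕ) {T t : ℕ}
    (htT : t ≤ T) :
    ∫ x, Vstar n γ (traj n (coinActions x) 1 t) ∂fairCoins T
      ≤ (1 + γ ^ (n - m) + (1 / 2) ^ m) / (2 * (1 - γ)) :=
  calc _ ≤ ∫ x, (1 + γ ^ (n - traj n (coinActions x) 1 t)) / (2 * (1 - γ)) ∂fairCoins T :=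
        integral_mono .of_finite .of_finite fun x => Vstar_le n hγ0 hγ1 _
    _ = (1 + ∫ x, γ ^ (n - traj n (coinActions x) 1 t) ∂fairCoins T) / (2 * (1 - γ)) := by
        rw [integral_div, integral_add .of_finite .of_finite, integral_const]
        simp
    _ ≤ _ := by
        gcongr ?_ / _
        linarith [integral_pow_sub_traj_le hγ0 hγ1.le n m htT]

lemma integral_one_div_mul_sum_Icc_le {α : Type*} [MeasurableSpace α] (μ : Measure α)
    (g : ℕ → α → ℝ) {T : ℕ} {c : ℝ} (hc : 0 ≤ c) (hg : ∀ t ∈ Icc 1 T, Integrable (g t) μ)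
    (hle : ∀ t ∈ Icc 1 T, ∫ x, g t x ∂μ ≤ c) :
    ∫ x, 1 / (T : ℝ) * ∑ t ∈ Icc 1 T, g t x ∂μ ≤ c := by
  rw [integral_const_mul, integral_finsetSum _ hg]
  rcases T.eq_zero_or_pos with rfl | hT
  · simpa using hc
  calc 1 / (T : ℝ) * ∑ t ∈ Icc 1 T, ∫ x, g t x ∂μ ≤ 1 / T * (T * c) := by
        gcongr
        simpa using sum_le_card_nsmul _ _ _ hle
    _ = c := by field_simp

/-- probabilistic core of the paper's Theorem 1. Let `γ ∈ (1/2,1)`,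
`f = ⌈1/(1-γ^(1/3))⌉`, `n ≥ 2f + 2` and `T = 2^(n-2f-1)`. Under `T` independent fair coin
flips driving the chain with `n` states and MDP `M(1)` from state `1`, the expected average
optimal value of the visited states falls short of `1/(1-γ)` by more than `1/(4(1-γ))`. -/
theorem random_play_suboptimal (γ : ℝ) (hγ : 1 / 2 < γ) (hγ1 : γ < 1)
    (f : ℕ) (hf : f = ⌈1 / (1 - γ ^ ((1 : ℝ) / 3))⌉₊)
    (n : ℕ) (hn : 2 * f + 2 ≤ n)
    (T : ℕ) :
    1 / (1 - γ) -
      ∫ x : Fin T → Bool,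
        (1 / (T : ℝ)) * ∑ t ∈ Finset.Icc 1 T,
          Vstar n γ (traj n (fun s => if h : s < T then x ⟨s, h⟩ else false) 1 t)
        ∂(Measure.pi fun _ : Fin T =>
            (PMF.bernoulli (1 / 2) (by norm_num)).toMeasure)
      > 1 / (4 * (1 - γ)) := by
  have hγ0 : 0 < γ := by linarith
  have h1γ : 0 < 1 - γ := by linarith
  have hγf : γ ^ f ≤ 1 / 8 := hf ▸ pow_ceil_one_div_one_sub_rpow_le hγ0 hγ1
  have hf1 : 1 ≤ f := Nat.one_le_iff_ne_zero.2 fun h => by norm_num [h] at hγf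
  have hstep : ∀ t ∈ Icc 1 T,
      ∫ x, Vstar n γ (traj n (coinActions x) 1 t) ∂fairCoins T ≤ 11 / 16 / (1 - γ) := by
    intro t ht
    refine (integral_Vstar_traj_le hγ0.le hγ1 n (n - f - 1) (mem_Icc.1 ht).2).trans ?_
    have h1 : γ ^ (n - (n - f - 1)) ≤ γ ^ f := pow_le_pow_of_le_one hγ0.le hγ1.le (by omega)
    have h2 : (1 / 2 : ℝ) ^ (n - f - 1) ≤ (1 / 2) ^ 2 :=
      pow_le_pow_of_le_one (by norm_num) (by norm_num) (by omega)
    calc _ ≤ (1 + 1 / 8 + 1 / 4) / (2 * (1 - γ)) :=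
          div_le_div_of_nonneg_right (by linarith) (by linarith)
      _ = 11 / 16 / (1 - γ) := by field_simp; ring
  have havg := integral_one_div_mul_sum_Icc_le (fairCoins T)
    (fun t x => Vstar n γ (traj n (coinActions x) 1 t)) (by positivity)
    (fun _ _ => .of_finite) hstep
  have hgap : 1 / (4 * (1 - γ)) < 1 / (1 - γ) - 11 / 16 / (1 - γ) := by
    field_simp
    norm_num
  exact hgap.trans_le (sub_le_sub_left havg _)
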